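/- The function φ(z) = (1−z)^{−α−β} · P_n(z; −β, −α) satisfies the generalized eigenvalue equation L₁ φ = (n − α − β) L₂ φ, where L₁ = z(1−z)∂_z² + (1−β−(2+α)z)∂_z and L₂ = (1−z)∂_z − (α+1)I. -/

import Mathlib

open Finset

noncomputable def poch (a : ℝ) (k : ℕ) : ℝ := ∏ i ∈ Finset.range k, (a + i)

noncomputable def HR (n : ℕ) (α β : ℝ) (z : ℝ) : ℝ :=
  (poch β n / poch (α + 1) n) *
    ∑ k ∈ Finset.range (n + 1),
      (poch (-(n : ℝ)) k * poch (α + 1) k) / ((k.factorial : ℝ) * poch (1 - β - (n : ℝ)) k) * z ^ k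

/-!
Writing `φ(z) = (1 - z)^{-(α+β)} S(z)`, a direct computation turns `L₁ φ - (n - α - β) L₂ φ` into
`(1 - z)^{-(α+β)}` times the hypergeometric operator `z(1-z)S'' + (c - (a+b+1)z)S' - abS` with
`(a, b, c) = (-n, 1 - β, 1 + α - n)`. The polynomial `P_n(z; -β, -α)` is, up to a constant factor,
the terminating series `₂F₁(-n, 1 - β; 1 + α - n; z)`, and a polynomial whose coefficients obey
`(k+1)(k+c) p_{k+1} = (k+a)(k+b) p_k` is annihilated by that operator.
-/

open Polynomial Filter Topology

lemma poch_succ (a : ℝ) (k : ℕ) : poch a (k + 1) = poch a k * (a + k) :=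
  prod_range_succ _ _

lemma poch_ne_zero {a : ℝ} {k : ℕ} (h : ∀ i < k, a + i ≠ 0) : poch a k ≠ 0 :=
  prod_ne_zero_iff.2 fun i hi => h i (mem_range.1 hi)

lemma poch_neg_natCast_eq_zero {n k : ℕ} (h : n < k) : poch (-(n : ℝ)) k = 0 :=
  prod_eq_zero (mem_range.2 h) (neg_add_cancel _)

noncomputable def Polynomial.hypergeometricOp {R : Type*} [CommRing R] (a b c : R) (p : R[X]) :
    R[X] :=
  X * (1 - X) * derivative (derivative p) + (C c - C (a + b + 1) * X) * derivative p - C (a * b) * p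

theorem Polynomial.hypergeometricOp_eq_zero {R : Type*} [CommRing R] {a b c : R} {p : R[X]}
    (h : ∀ k : ℕ, ((k : R) + 1) * (k + c) * p.coeff (k + 1) = (k + a) * (k + b) * p.coeff k) :
    hypergeometricOp a b c p = 0 := by
  have hX (q : R[X]) (m : ℕ) : (X * q).coeff m = if m = 0 then 0 else q.coeff (m - 1) := by
    rcases m with _ | m <;> simp
  ext k
  simp only [hypergeometricOp, mul_sub, sub_mul, mul_one, mul_assoc, mul_comm _ X, coeff_sub,
    coeff_add, coeff_C_mul, hX, coeff_derivative, coeff_zero]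
  rcases k with _ | _ | k
  · simp
    linear_combination h 0
  · simp
    linear_combination h 1
  · have hk := h (k + 2)
    simp
    push_cast at hk ⊢
    linear_combination hk

noncomputable def hrCoeff (n : ℕ) (α β : ℝ) (k : ℕ) : ℝ :=
  poch β n / poch (α + 1) n *
    (poch (-(n : ℝ)) k * poch (α + 1) k / ((k.factorial : ℝ) * poch (1 - β - n) k))

noncomputable def hrPoly (n : ℕ) (α β : ℝ) : ℝ[X] :=
  ∑ k ∈ range (n + 1), C (hrCoeff n α β k) * X ^ k

lemma eval_hrPoly (n : ℕ) (α β z : ℝ) : (hrPoly n α β).eval z = HR n α β z := by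
  simp [hrPoly, HR, hrCoeff, eval_finsetSum, mul_sum, mul_assoc]

lemma hrCoeff_eq_zero {n k : ℕ} (α β : ℝ) (h : n < k) : hrCoeff n α β k = 0 := by
  simp [hrCoeff, poch_neg_natCast_eq_zero h]

lemma coeff_hrPoly (n : ℕ) (α β : ℝ) (k : ℕ) : (hrPoly n α β).coeff k = hrCoeff n α β k := by
  simp only [hrPoly, finsetSum_coeff, coeff_C_mul_X_pow, sum_ite_eq, mem_range]
  split_ifs with hk
  · rfl
  · exact (hrCoeff_eq_zero α β (by omega)).symm

lemma hrCoeff_succ {n : ℕ} {α β : ℝ} (h : ∀ j < n, 1 - β - n + j ≠ 0) (k : ℕ) :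
    ((k : ℝ) + 1) * (k + (1 - β - n)) * hrCoeff n α β (k + 1)
      = (k + -n) * (k + (α + 1)) * hrCoeff n α β k := by
  rcases lt_or_ge k n with hk | hk
  · have hc : poch (1 - β - n) k ≠ 0 := poch_ne_zero fun i hi => h i (hi.trans hk)
    have hck : 1 - β - n + k ≠ 0 := h k hk
    simp only [hrCoeff, poch_succ, Nat.factorial_succ]
    push_cast
    field_simp
    ring
  · -- `(-n)_{k+1} = 0`, and `(-n)_k = 0` unless `k = n`, where the factor `k - n` vanishes
    rw [hrCoeff_eq_zero α β (Nat.lt_succ_of_le hk), mul_zero]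
    obtain rfl | hk := hk.eq_or_lt
    · simp
    · rw [hrCoeff_eq_zero α β hk, mul_zero]

lemma hypergeometricOp_hrPoly {n : ℕ} {α β : ℝ} (h : ∀ j < n, 1 - β - n + j ≠ 0) :
    hypergeometricOp (-(n : ℝ)) (α + 1) (1 - β - n) (hrPoly n α β) = 0 :=
  hypergeometricOp_eq_zero fun k => by simpa only [coeff_hrPoly] using hrCoeff_succ h k

lemma hasDerivAt_one_sub_rpow_neg_mul {f : ℝ → ℝ} {f' s t : ℝ} (hf : HasDerivAt f f' t)
    (ht : t < 1) :
    HasDerivAt (fun u => (1 - u) ^ (-s) * f u)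
      ((1 - t) ^ (-(s + 1)) * (s * f t + (1 - t) * f')) t := by
  have hsub : HasDerivAt (fun u : ℝ => 1 - u) (-1) t := by
    simpa using (hasDerivAt_id t).const_sub 1
  refine ((hsub.rpow_const (p := -s) (Or.inl (sub_pos.2 ht).ne')).fun_mul hf).congr_deriv ?_
  rw [show -s - 1 = -(s + 1) by ring, show -s = -(s + 1) + 1 by ring,
    Real.rpow_add_one (sub_pos.2 ht).ne']
  ring

lemma deriv_deriv_one_sub_rpow_neg_mul {f f' : ℝ → ℝ} {f'' s z : ℝ}
    (hf : ∀ t < 1, HasDerivAt f (f' t) t) (hf' : HasDerivAt f' f'' z) (hz : z < 1) :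
    deriv (deriv fun u => (1 - u) ^ (-s) * f u) z
      = (1 - z) ^ (-(s + 2)) * (s * (s + 1) * f z + 2 * s * (1 - z) * f' z + (1 - z) ^ 2 * f'') := by
  have hderiv : deriv (fun u => (1 - u) ^ (-s) * f u)
      =ᶠ[𝓝 z] fun u => (1 - u) ^ (-(s + 1)) * (s * f u + (1 - u) * f' u) := by
    filter_upwards [Iio_mem_nhds hz] with t ht
    exact (hasDerivAt_one_sub_rpow_neg_mul (hf t ht) ht).deriv
  have hsub : HasDerivAt (fun u : ℝ => 1 - u) (-1) z := by
    simpa using (hasDerivAt_id z).const_sub 1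
  have hinner := ((hf z hz).const_mul s).fun_add (hsub.fun_mul hf')
  rw [hderiv.deriv_eq, (hasDerivAt_one_sub_rpow_neg_mul hinner hz).deriv]
  rw [show s + 1 + 1 = s + 2 by ring]
  ring

theorem hr_quasi_eigenfunction_type2_general (n : ℕ) (α β : ℝ)
    (hd : ∀ j < n, 1 + α - (n : ℝ) + (j : ℝ) ≠ 0) :
    ∀ z : ℝ, z < 1 →
      z * (1 - z) * deriv (deriv (fun t => (1 - t) ^ (-(α + β)) * HR n (-β) (-α) t)) z
        + (1 - β - (2 + α) * z) * deriv (fun t => (1 - t) ^ (-(α + β)) * HR n (-β) (-α) t) z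
      = ((n : ℝ) - α - β) *
          ((1 - z) * deriv (fun t => (1 - t) ^ (-(α + β)) * HR n (-β) (-α) t) z
            - (α + 1) * ((1 - z) ^ (-(α + β)) * HR n (-β) (-α) z)) := by
  intro z hz
  set p := hrPoly n (-β) (-α)
  have hode := congrArg (eval z) (hypergeometricOp_hrPoly (α := -β) (β := -α) (by simpa using hd))
  simp only [hypergeometricOp, eval_sub, eval_add, eval_mul, eval_C, eval_X, eval_one,
    eval_zero] at hode
  have hHR : HR n (-β) (-α) = fun t => p.eval t := funext fun t => (eval_hrPoly ..).symm
  have hp (t : ℝ) := Polynomial.hasDerivAt p t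
  rw [hHR, deriv_deriv_one_sub_rpow_neg_mul (fun t _ => hp t) (Polynomial.hasDerivAt _ z) hz,
    (hasDerivAt_one_sub_rpow_neg_mul (hp z) hz).deriv]
  have h1z : 1 - z ≠ 0 := (sub_pos.2 hz).ne'
  rw [show -(α + β) = -(α + β + 1) + 1 by ring, Real.rpow_add_one h1z,
    show -(α + β + 1) = -(α + β + 2) + 1 by ring, Real.rpow_add_one h1z]
  linear_combination (1 - z) ^ (-(α + β + 2)) * (1 - z) ^ 2 * hode

theorem hr_quasi_eigenfunction_type2 (n : ℕ) (α β : ℝ)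
    (hβ : ∀ j < n, -α + (j : ℝ) ≠ 0)
    (hα : ∀ j < n, -β + 1 + (j : ℝ) ≠ 0)
    (hd : ∀ j < n, 1 + α - (n : ℝ) + (j : ℝ) ≠ 0) :
    ∀ z : ℝ, z < 1 →
      z * (1 - z) * deriv (deriv (fun t => (1 - t) ^ (-(α + β)) * HR n (-β) (-α) t)) z
        + (1 - β - (2 + α) * z) * deriv (fun t => (1 - t) ^ (-(α + β)) * HR n (-β) (-α) t) z
      = ((n : ℝ) - α - β) *
          ((1 - z) * deriv (fun t => (1 - t) ^ (-(α + β)) * HR n (-β) (-α) t) z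
            - (α + 1) * ((1 - z) ^ (-(α + β)) * HR n (-β) (-α) z)) :=
  hr_quasi_eigenfunction_type2_general n α β hd
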